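/- For every nonzero integer k, the negative continued fraction identity (6k+2)/3 = [[2k, −2, −2]] holds, and consequently σ(3, 6k+2, −1) = 2 − sgn(k). -/

import Mathlib

/-- The invariant `σ(q, p, ε)` (Fukumoto–Furuta–Ue): for integers `p ≠ 0`, `q` coprime to `p`
and a sign `ε ∈ {1, -1}`,
`σ(q,p,ε) = (1/p) ∑_{k=1}^{|p|-1} ( cot(πk/p)·cot(πkq/p) + 2 ε^k csc(πk/p)·csc(πkq/p) )`. -/
noncomputable def sigmaFFU (q p ε : ℤ) : ℝ :=
  (1 / (p : ℝ)) * ∑ k ∈ Finset.Icc 1 (p.natAbs - 1),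
    ((Real.cos (Real.pi * k / p) / Real.sin (Real.pi * k / p)) *
       (Real.cos (Real.pi * k * q / p) / Real.sin (Real.pi * k * q / p)) +
     2 * (ε : ℝ) ^ k *
       ((1 / Real.sin (Real.pi * k / p)) * (1 / Real.sin (Real.pi * k * q / p))))

/-- Negative continued fraction `[[α₁, …, αₙ]] = α₁ - 1/(α₂ - 1/(⋯ - 1/αₙ))`,
defined on lists of integers (`ncf [] = 0` is a junk value). -/
def ncf : List ℤ → ℚ
  | [] => 0
  | [a] => (a : ℚ)
  | a :: b :: l => (a : ℚ) - 1 / ncf (b :: l)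

/-!
Write `n = |p| = 2m` and `x = πj/n`. The triple-angle formulas turn the `j`-th summand of
`σ(3, p, -1)` into `-1 + (2 + 4ε)/3 · (1 - cos 2x)⁻¹ + 2(4ε - 1)/3 · (1 + 2 cos 2x)⁻¹` with
`ε = (-1)^j`, and separating even and odd `j` reduces the alternating sums to sums over the
nontrivial `m`-th and `2m`-th roots of unity. Such sums are computed by finite Fourier expansion:
for `u ≠ 1` with `uⁿ = 1` one has `1/(u - 1) = (1/n) ∑_{t<n} t uᵗ`, and summing `uᵗ` over the
roots only sees `n ∣ t`. This gives `∑_{0<j<n} (1 - cos(2πj/n))⁻¹ = (n² - 1)/6`, while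
`∑_{0<j<n} (1 + 2 cos(2πj/n))⁻¹` is `(n - 1)/3` or `-(n + 1)/3` according as `n ≡ 1` or
`n ≡ 2 (mod 3)`. Hence `σ(3, 2m, -1)` is `1` for `m ≡ 1` and `-3` for `m ≡ 2 (mod 3)`, and
`σ` is odd in `p`.
-/

open Finset

section CommRing

variable {R : Type*} [CommRing R]

theorem sub_one_mul_sum_range_mul_pow (u : R) (n : ℕ) :
    (u - 1) * ∑ t ∈ range n, (t : R) * u ^ t = (n - 1) * u ^ n - ∑ t ∈ range n, u ^ t + 1 := by
  induction n with
  | zero => simp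
  | succ n ih =>
    simp only [sum_range_succ, mul_add, ih]
    push_cast
    ring

theorem sub_one_mul_sum_range_mul_sub_mul_pow (u a : R) (n : ℕ) :
    (u - 1) * ∑ t ∈ range n, (t : R) * (a - t) * u ^ t =
      (n - 1) * (a - n + 1) * u ^ n + ∑ t ∈ range n, (2 * t - a - 1) * u ^ t + a + 1 := by
  induction n with
  | zero => simp
  | succ n ih =>
    simp only [sum_range_succ, mul_add, ih]
    push_cast
    ring

theorem six_mul_sum_range_mul_sub (a : R) (n : ℕ) :
    6 * ∑ t ∈ range n, (t : R) * (a - t) = n * (n - 1) * (3 * a - 2 * n + 1) := by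
  induction n with
  | zero => simp
  | succ n ih =>
    rw [sum_range_succ, mul_add, ih]
    push_cast
    ring

theorem sum_range_neg_one_pow_mul (f : ℕ → R) (m : ℕ) :
    ∑ j ∈ range (2 * m), (-1) ^ j * f j =
      2 * ∑ i ∈ range m, f (2 * i) - ∑ j ∈ range (2 * m), f j := by
  induction m with
  | zero => simp
  | succ m ih =>
    rw [show 2 * (m + 1) = 2 * m + 1 + 1 by ring]
    simp only [sum_range_succ, ih, pow_succ, (even_two_mul m).neg_one_pow]
    ring

end CommRing

theorem Nat.dvd_iff_eq_or_eq_two_mul_of_lt_three_mul {n x : ℕ} (hx : 0 < x) (hxn : x < 3 * n) :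
    n ∣ x ↔ x = n ∨ x = 2 * n := by
  constructor
  · rintro ⟨c, rfl⟩
    have hc : c < 3 := by nlinarith
    interval_cases c <;> omega
  · rintro (rfl | rfl)
    exacts [dvd_rfl, dvd_mul_left _ _]

theorem Finset.sum_range_eq_add_sum_Icc {M : Type*} [AddCommMonoid M] (f : ℕ → M) {n : ℕ}
    (hn : 0 < n) : ∑ j ∈ range n, f j = f 0 + ∑ j ∈ Icc 1 (n - 1), f j := by
  have hrange : range n = insert 0 (Icc 1 (n - 1)) := by
    ext j
    simp only [mem_range, mem_insert, mem_Icc]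
    omega
  rw [hrange, sum_insert (by simp)]

section Field

variable {K : Type*} [Field K] {u ζ : K} {n : ℕ}

theorem sum_range_mul_pow_of_pow_eq_one (hu : u ^ n = 1) (hu₁ : u ≠ 1) :
    ∑ t ∈ range n, (t : K) * u ^ t = n / (u - 1) := by
  have hsub : u - 1 ≠ 0 := sub_ne_zero.2 hu₁
  rw [eq_div_iff hsub, mul_comm, sub_one_mul_sum_range_mul_pow, hu,
    geom_sum_eq hu₁, hu, sub_self, zero_div]
  ring

theorem sum_range_mul_sub_mul_pow_of_pow_eq_one (hu : u ^ n = 1) (hu₁ : u ≠ 1) :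
    ∑ t ∈ range n, (t : K) * (n - t) * u ^ t = 2 * n * u / (u - 1) ^ 2 := by
  have hsub : u - 1 ≠ 0 := sub_ne_zero.2 hu₁
  have hgeom : ∑ t ∈ range n, u ^ t = 0 := by rw [geom_sum_eq hu₁, hu, sub_self, zero_div]
  have hlin : ∑ t ∈ range n, (2 * t - n - 1 : K) * u ^ t = 2 * (n / (u - 1)) := by
    have h : ∀ t : ℕ, (2 * t - n - 1 : K) * u ^ t = 2 * (t * u ^ t) - (n + 1) * u ^ t :=
      fun t => by ring
    simp only [h, sum_sub_distrib, ← mul_sum, sum_range_mul_pow_of_pow_eq_one hu hu₁, hgeom,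
      mul_zero, sub_zero]
  have key := sub_one_mul_sum_range_mul_sub_mul_pow u (n : K) n
  rw [hu, hlin] at key
  rw [eq_div_iff (pow_ne_zero 2 hsub)]
  field_simp at key
  linear_combination key

theorem IsPrimitiveRoot.sum_Icc_pow_pow (hζ : IsPrimitiveRoot ζ n) (hn : 0 < n) (e : ℕ) :
    ∑ j ∈ Icc 1 (n - 1), (ζ ^ j) ^ e = if n ∣ e then (n : K) - 1 else -1 := by
  have hgeom : ∑ j ∈ range n, (ζ ^ e) ^ j = if n ∣ e then (n : K) else 0 := by
    split_ifs with he
    · simp [(hζ.pow_eq_one_iff_dvd e).2 he]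
    · rw [geom_sum_eq (mt (hζ.pow_eq_one_iff_dvd e).1 he), ← pow_mul, mul_comm, pow_mul,
        hζ.pow_eq_one, one_pow, sub_self, zero_div]
  simp_rw [← pow_mul, mul_comm _ e, pow_mul] at hgeom ⊢
  rw [sum_range_eq_add_sum_Icc _ hn, pow_zero] at hgeom
  split_ifs at hgeom ⊢ <;> linear_combination hgeom

theorem IsPrimitiveRoot.sum_Icc_sum_mul_pow_pow (hζ : IsPrimitiveRoot ζ n) (hn : 0 < n)
    {ι : Type*} (s : Finset ι) (c : ι → K) (e : ι → ℕ) :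
    ∑ j ∈ Icc 1 (n - 1), ∑ t ∈ s, c t * (ζ ^ j) ^ e t =
      ∑ t ∈ s, c t * if n ∣ e t then (n : K) - 1 else -1 := by
  rw [sum_comm]
  exact sum_congr rfl fun t _ => by rw [← mul_sum, hζ.sum_Icc_pow_pow hn]

theorem sum_range_mul_ite_eq {p : ℕ → Prop} [DecidablePred p] {t₀ : ℕ} (ht₀ : t₀ < n)
    (hp : ∀ t < n, p t ↔ t = t₀) :
    ∑ t ∈ range n, (t : K) * (if p t then 1 else 0) = t₀ := by
  rw [sum_eq_single t₀ (fun t ht hne => by simp [(hp t (mem_range.1 ht)).not.2 hne])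
    (fun h => absurd (mem_range.2 ht₀) h), if_pos ((hp t₀ ht₀).2 rfl), mul_one]

variable [CharZero K]

theorem IsPrimitiveRoot.sum_Icc_div_sub_one_sq (hζ : IsPrimitiveRoot ζ n) (hn : 0 < n) :
    ∑ j ∈ Icc 1 (n - 1), ζ ^ j / (ζ ^ j - 1) ^ 2 = -((n : K) ^ 2 - 1) / 12 := by
  have hn' : (n : K) ≠ 0 := Nat.cast_ne_zero.2 hn.ne'
  have hterm : ∀ j ∈ Icc 1 (n - 1),
      ζ ^ j / (ζ ^ j - 1) ^ 2 = ∑ t ∈ range n, t * (n - t) / (2 * n) * (ζ ^ j) ^ t := by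
    intro j hj
    rw [mem_Icc] at hj
    have hu₁ : ζ ^ j ≠ 1 := hζ.pow_ne_one_of_pos_of_lt (by omega) (by omega)
    simp_rw [div_mul_eq_mul_div, ← sum_div,
      sum_range_mul_sub_mul_pow_of_pow_eq_one (by rw [pow_right_comm, hζ.pow_eq_one, one_pow]) hu₁]
    field_simp
  have hcoeff : ∀ t ∈ range n, (t * (n - t) / (2 * n) : K) * (if n ∣ t then (n : K) - 1 else -1) =
      -(t * (n - t) / (2 * n)) := by
    intro t ht
    split_ifs with h
    · rw [Nat.eq_zero_of_dvd_of_lt h (mem_range.1 ht)]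
      simp
    · ring
  rw [sum_congr rfl hterm, hζ.sum_Icc_sum_mul_pow_pow hn, sum_congr rfl hcoeff, sum_neg_distrib,
    ← sum_div]
  have hsum := six_mul_sum_range_mul_sub (n : K) n
  field_simp
  linear_combination -2 * hsum

theorem IsPrimitiveRoot.sum_Icc_div_sq_add_add_one (hζ : IsPrimitiveRoot ζ n) (hn : 0 < n)
    (h3 : ¬ 3 ∣ n) :
    ∑ j ∈ Icc 1 (n - 1), ζ ^ j / ((ζ ^ j) ^ 2 + ζ ^ j + 1) =
      ∑ t ∈ range n, (t : K) * (if n ∣ 3 * t + 2 then 1 else 0) -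
        ∑ t ∈ range n, (t : K) * (if n ∣ 3 * t + 1 then 1 else 0) := by
  have hn' : (n : K) ≠ 0 := Nat.cast_ne_zero.2 hn.ne'
  have hζ₃ : IsPrimitiveRoot (ζ ^ 3) n := hζ.pow_of_prime Nat.prime_three h3
  -- `u / (u² + u + 1) = (u² - u) / (u³ - 1)`, and `u³` is again a nontrivial `n`-th root of unity
  have hterm : ∀ j ∈ Icc 1 (n - 1), ζ ^ j / ((ζ ^ j) ^ 2 + ζ ^ j + 1) =
      ∑ t ∈ range n, t / n * (ζ ^ j) ^ (3 * t + 2) -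
        ∑ t ∈ range n, t / n * (ζ ^ j) ^ (3 * t + 1) := by
    intro j hj
    rw [mem_Icc] at hj
    have hv₁ : (ζ ^ 3) ^ j ≠ 1 := hζ₃.pow_ne_one_of_pos_of_lt (by omega) (by omega)
    have hu₁ : ζ ^ j ≠ 1 := hζ.pow_ne_one_of_pos_of_lt (by omega) (by omega)
    have hsum := sum_range_mul_pow_of_pow_eq_one
      (by rw [pow_right_comm, hζ₃.pow_eq_one, one_pow]) hv₁
    have hpart : ∀ a : ℕ, ∑ t ∈ range n, t / n * (ζ ^ j) ^ (3 * t + a) =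
        (ζ ^ j) ^ a / ((ζ ^ 3) ^ j - 1) := by
      intro a
      calc ∑ t ∈ range n, t / n * (ζ ^ j) ^ (3 * t + a)
          = (ζ ^ j) ^ a / n * ∑ t ∈ range n, t * ((ζ ^ 3) ^ j) ^ t := by
            rw [mul_sum]
            refine sum_congr rfl fun t _ => ?_
            simp only [← pow_mul]
            rw [show j * (3 * t + a) = j * a + 3 * (j * t) by ring, pow_add]
            ring
        _ = (ζ ^ j) ^ a / ((ζ ^ 3) ^ j - 1) := by
            rw [hsum]
            field_simp
    have hv : (ζ ^ 3) ^ j - 1 = (ζ ^ j - 1) * ((ζ ^ j) ^ 2 + ζ ^ j + 1) := by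
      rw [pow_right_comm]
      ring
    have hq : (ζ ^ j) ^ 2 + ζ ^ j + 1 ≠ 0 := fun h => hv₁ (by
      rw [← sub_eq_zero, hv, h, mul_zero])
    rw [hpart, hpart, hv]
    field_simp [sub_ne_zero.2 hu₁]
  rw [sum_congr rfl hterm, sum_sub_distrib, hζ.sum_Icc_sum_mul_pow_pow hn,
    hζ.sum_Icc_sum_mul_pow_pow hn, ← sum_sub_distrib, ← sum_sub_distrib]
  refine sum_congr rfl fun t _ => ?_
  split_ifs <;> field_simp <;> ring

end Field

section Trigonometric

open Real Complex

theorem Complex.ofReal_inv_one_sub_cos (θ : ℝ) :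
    (((1 - Real.cos θ)⁻¹ : ℝ) : ℂ) = -2 * (exp (θ * I) / (exp (θ * I) - 1) ^ 2) := by
  have h : (1 : ℂ) - Complex.cos θ = -(exp (θ * I) - 1) ^ 2 / (2 * exp (θ * I)) := by
    rw [Complex.cos, neg_mul, exp_neg]
    field_simp
    ring
  push_cast
  rw [h, inv_div, div_neg]
  ring

theorem Complex.ofReal_inv_one_add_two_cos (θ : ℝ) :
    (((1 + 2 * Real.cos θ)⁻¹ : ℝ) : ℂ) = exp (θ * I) / (exp (θ * I) ^ 2 + exp (θ * I) + 1) := by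
  have h : (1 : ℂ) + 2 * Complex.cos θ = (exp (θ * I) ^ 2 + exp (θ * I) + 1) / exp (θ * I) := by
    rw [Complex.cos, neg_mul, exp_neg]
    field_simp
    ring
  push_cast
  rw [h, inv_div]

theorem Complex.exp_two_pi_mul_I_div_pow (n j : ℕ) :
    exp (2 * π * I / n) ^ j = exp (↑(2 * π * (j / n)) * I) := by
  rw [← exp_nat_mul]
  push_cast
  ring_nf

end Trigonometric

section FracSum

open Real

noncomputable def fracSum (g : ℝ → ℝ) (n : ℕ) : ℝ := ∑ j ∈ Icc 1 (n - 1), g (j / n)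

variable {n : ℕ}

theorem fracSum_inv_one_sub_cos (hn : 0 < n) :
    fracSum (fun x => (1 - cos (2 * π * x))⁻¹) n = ((n : ℝ) ^ 2 - 1) / 6 := by
  have h := (Complex.isPrimitiveRoot_exp n hn.ne').sum_Icc_div_sub_one_sq hn
  apply Complex.ofReal_injective
  rw [fracSum, Complex.ofReal_sum]
  simp_rw [Complex.ofReal_inv_one_sub_cos, ← Complex.exp_two_pi_mul_I_div_pow]
  rw [← mul_sum, h]
  push_cast
  ring

theorem fracSum_inv_one_add_two_cos (hn : 0 < n) (h3 : ¬ 3 ∣ n) :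
    fracSum (fun x => (1 + 2 * cos (2 * π * x))⁻¹) n =
      ∑ t ∈ range n, (t : ℝ) * (if n ∣ 3 * t + 2 then 1 else 0) -
        ∑ t ∈ range n, (t : ℝ) * (if n ∣ 3 * t + 1 then 1 else 0) := by
  have h := (Complex.isPrimitiveRoot_exp n hn.ne').sum_Icc_div_sq_add_add_one hn h3
  apply Complex.ofReal_injective
  rw [fracSum, Complex.ofReal_sum]
  simp_rw [Complex.ofReal_inv_one_add_two_cos, ← Complex.exp_two_pi_mul_I_div_pow]
  rw [h]
  push_cast [apply_ite Complex.ofReal]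
  rfl

theorem fracSum_inv_one_add_two_cos_three_mul_add_one (r : ℕ) :
    fracSum (fun x => (1 + 2 * cos (2 * π * x))⁻¹) (3 * r + 1) = r := by
  rw [fracSum_inv_one_add_two_cos (by omega) (by omega),
    sum_range_mul_ite_eq (t₀ := 2 * r) (by omega) fun t ht => by
      rw [Nat.dvd_iff_eq_or_eq_two_mul_of_lt_three_mul (by omega) (by omega)]; omega,
    sum_range_mul_ite_eq (t₀ := r) (by omega) fun t ht => by
      rw [Nat.dvd_iff_eq_or_eq_two_mul_of_lt_three_mul (by omega) (by omega)]; omega]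
  push_cast
  ring

theorem fracSum_inv_one_add_two_cos_three_mul_add_two (r : ℕ) :
    fracSum (fun x => (1 + 2 * cos (2 * π * x))⁻¹) (3 * r + 2) = -(r + 1) := by
  rw [fracSum_inv_one_add_two_cos (by omega) (by omega),
    sum_range_mul_ite_eq (t₀ := r) (by omega) fun t ht => by
      rw [Nat.dvd_iff_eq_or_eq_two_mul_of_lt_three_mul (by omega) (by omega)]; omega,
    sum_range_mul_ite_eq (t₀ := 2 * r + 1) (by omega) fun t ht => by
      rw [Nat.dvd_iff_eq_or_eq_two_mul_of_lt_three_mul (by omega) (by omega)]; omega]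
  push_cast
  ring

theorem sum_Icc_neg_one_pow_mul (g : ℝ → ℝ) {m : ℕ} (hm : 0 < m) :
    ∑ j ∈ Icc 1 (2 * m - 1), (-1) ^ j * g (j / (2 * m : ℕ)) =
      2 * fracSum g m - fracSum g (2 * m) := by
  have h := sum_range_neg_one_pow_mul (fun j => g (j / (2 * m : ℕ))) m
  have hhalf : ∀ i ∈ Icc 1 (m - 1), g ((2 * i : ℕ) / (2 * m : ℕ)) = g (i / m) := by
    intro i _
    push_cast
    rw [mul_div_mul_left _ _ two_ne_zero]
  rw [sum_range_eq_add_sum_Icc _ (by omega), sum_range_eq_add_sum_Icc _ hm,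
    sum_range_eq_add_sum_Icc _ (by omega), sum_congr rfl hhalf] at h
  rw [fracSum, fracSum]
  simp only [pow_zero, one_mul, mul_zero] at h
  linear_combination h

end FracSum

section Sigma

open Real

theorem sigmaFFU_neg (q p ε : ℤ) : sigmaFFU q (-p) ε = -sigmaFFU q p ε := by
  simp only [sigmaFFU, Int.natAbs_neg, Int.cast_neg, div_neg, cos_neg, sin_neg, neg_mul, mul_neg,
    neg_neg]

theorem Real.sin_pi_mul_div_ne_zero {j n : ℕ} (hn : 0 < n) (h : ¬ n ∣ j) :
    sin (π * j / n) ≠ 0 := by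
  intro h0
  obtain ⟨t, ht⟩ := sin_eq_zero_iff.1 h0
  have htn : (t * n : ℝ) = j := by
    field_simp at ht
    linear_combination ht
  exact h (Int.natCast_dvd_natCast.1 ⟨t, by exact_mod_cast htn.symm.trans (mul_comm _ _)⟩)

theorem cot_mul_cot_three_mul_add_csc_mul_csc_three_mul (x ε : ℝ) (hs : sin x ≠ 0)
    (hs₃ : sin (3 * x) ≠ 0) :
    cos x / sin x * (cos (3 * x) / sin (3 * x)) + 2 * ε * (1 / sin x * (1 / sin (3 * x))) =
      -1 + (2 + 4 * ε) / 3 * (1 - cos (2 * x))⁻¹ +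
        2 * (4 * ε - 1) / 3 * (1 + 2 * cos (2 * x))⁻¹ := by
  have hpy := sin_sq_add_cos_sq x
  have hcos : cos x * cos (3 * x) = (1 - sin x ^ 2) * (1 - 4 * sin x ^ 2) := by
    rw [cos_three_mul]
    linear_combination (4 * cos x ^ 2 + 1 - 4 * sin x ^ 2) * hpy
  have h₁ : 1 - cos (2 * x) = 2 * sin x ^ 2 := by
    rw [cos_two_mul']
    linear_combination -hpy
  have h₂ : 1 + 2 * cos (2 * x) = 3 - 4 * sin x ^ 2 := by
    rw [cos_two_mul']
    linear_combination 2 * hpy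
  have hs₃' : sin (3 * x) = sin x * (3 - 4 * sin x ^ 2) := by
    rw [sin_three_mul]
    ring
  have h₃ : 3 - sin x ^ 2 * 4 ≠ 0 := by
    rw [mul_comm]
    exact right_ne_zero_of_mul (hs₃' ▸ hs₃)
  rw [div_mul_div_comm, hcos, hs₃', h₁, h₂]
  field_simp
  ring

theorem sigmaFFU_three_two_mul_neg_one {m : ℕ} (hm : 0 < m) (h3 : ¬ 3 ∣ m) :
    sigmaFFU 3 (2 * m : ℕ) (-1) = 1 / (2 * m) *
      (-(2 * m) + 2 / 3 - 10 / 3 * fracSum (fun x => (1 + 2 * cos (2 * π * x))⁻¹) (2 * m) +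
        16 / 3 * fracSum (fun x => (1 + 2 * cos (2 * π * x))⁻¹) m) := by
  set a : ℝ → ℝ := fun x => (1 - cos (2 * π * x))⁻¹ with ha
  set b : ℝ → ℝ := fun x => (1 + 2 * cos (2 * π * x))⁻¹ with hb
  set n := 2 * m with hn
  have hterm : ∀ j ∈ Icc 1 (n - 1),
      cos (π * j / n) / sin (π * j / n) * (cos (π * j * 3 / n) / sin (π * j * 3 / n)) +
          2 * (-1) ^ j * (1 / sin (π * j / n) * (1 / sin (π * j * 3 / n))) =
        -1 + 2 / 3 * a (j / n) + 4 / 3 * ((-1) ^ j * a (j / n)) - 2 / 3 * b (j / n) +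
          8 / 3 * ((-1) ^ j * b (j / n)) := by
    intro j hj
    rw [mem_Icc] at hj
    have hs : sin (π * j / n) ≠ 0 :=
      sin_pi_mul_div_ne_zero (by omega) (Nat.not_dvd_of_pos_of_lt (by omega) (by omega))
    have hs₃ : sin (3 * (π * j / n)) ≠ 0 := by
      rw [show 3 * (π * j / n) = π * (3 * j : ℕ) / n by push_cast; ring]
      refine sin_pi_mul_div_ne_zero (by omega) ?_
      rw [Nat.dvd_iff_eq_or_eq_two_mul_of_lt_three_mul (by omega) (by omega)]
      omega
    rw [show π * j * 3 / n = 3 * (π * j / n) by ring,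
      cot_mul_cot_three_mul_add_csc_mul_csc_three_mul _ _ hs hs₃]
    simp only [ha, hb, show 2 * π * (j / n) = 2 * (π * j / n) by ring]
    ring
  have hfa : ∑ j ∈ Icc 1 (n - 1), a (j / n) = fracSum a n := rfl
  have hfb : ∑ j ∈ Icc 1 (n - 1), b (j / n) = fracSum b n := rfl
  have hA (k : ℕ) (hk : 0 < k) : fracSum a k = ((k : ℝ) ^ 2 - 1) / 6 := fracSum_inv_one_sub_cos hk
  simp only [sigmaFFU, Int.natAbs_natCast, Int.cast_natCast, Int.cast_ofNat, Int.cast_neg,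
    Int.cast_one]
  rw [sum_congr rfl hterm]
  simp only [sum_add_distrib, sum_sub_distrib, ← mul_sum, sum_const, Nat.card_Icc, nsmul_eq_mul]
  rw [hfa, hfb, sum_Icc_neg_one_pow_mul _ hm, sum_Icc_neg_one_pow_mul _ hm, hA m hm,
    hA n (by omega)]
  push_cast [hn, Nat.cast_sub (by omega : 1 ≤ 2 * m)]
  field_simp
  ring

theorem sigmaFFU_three_two_mul_three_mul_add_one_neg_one (r : ℕ) :
    sigmaFFU 3 (2 * (3 * r + 1) : ℕ) (-1) = 1 := by
  rw [sigmaFFU_three_two_mul_neg_one (by omega) (by omega),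
    show 2 * (3 * r + 1) = 3 * (2 * r) + 2 by ring, fracSum_inv_one_add_two_cos_three_mul_add_two,
    fracSum_inv_one_add_two_cos_three_mul_add_one]
  push_cast
  field_simp
  ring

theorem sigmaFFU_three_two_mul_three_mul_add_two_neg_one (r : ℕ) :
    sigmaFFU 3 (2 * (3 * r + 2) : ℕ) (-1) = -3 := by
  rw [sigmaFFU_three_two_mul_neg_one (by omega) (by omega),
    show 2 * (3 * r + 2) = 3 * (2 * r + 1) + 1 by ring,
    fracSum_inv_one_add_two_cos_three_mul_add_one, fracSum_inv_one_add_two_cos_three_mul_add_two]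
  push_cast
  field_simp
  ring

end Sigma

/-- For `k ≠ 0`, `(6k+2)/3 = [[2k, -2, -2]]` and `σ(3, 6k+2, -1) = 2 - sgn k`. -/
theorem ncf_sigma_six_k_two (k : ℤ) (hk : k ≠ 0) :
    ncf [2 * k, -2, -2] = ((6 * k + 2 : ℤ) : ℚ) / 3 ∧
      sigmaFFU 3 (6 * k + 2) (-1) = 2 - ((Int.sign k : ℤ) : ℝ) := by
  refine ⟨?_, ?_⟩
  · simp only [ncf]
    push_cast
    field_simp
    ring
  rcases hk.lt_or_gt with hk | hk
  · obtain ⟨r, rfl⟩ := Int.eq_negSucc_of_lt_zero hk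
    rw [show 6 * Int.negSucc r + 2 = -((2 * (3 * r + 2) : ℕ) : ℤ) by
        rw [Int.negSucc_eq]; push_cast; ring,
      sigmaFFU_neg, sigmaFFU_three_two_mul_three_mul_add_two_neg_one, Int.sign_negSucc]
    norm_num
  · lift k to ℕ using hk.le
    rw [show 6 * (k : ℤ) + 2 = ((2 * (3 * k + 1) : ℕ) : ℤ) by push_cast; ring,
      sigmaFFU_three_two_mul_three_mul_add_one_neg_one, Int.sign_natCast_of_ne_zero (by omega)]
    norm_num
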